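/- arXiv:1507.05410 — 16 statements merged into one kernel-verified Lean document; each statement's English description precedes it below -/
import Mathlib

section
/- Let R be a unitary ring, a, b, d ∈ R with b an outer inverse of a. If the right annihilator of b is contained in the right annihilator of d, then d = dab (and hence Rd ⊆ Rb); if the left annihilator of b is contained in the left annihilator of d, then d = bad (and hence dR ⊆ bR). -/
theorem annihilator_containment {R : Type*} [Ring R] (a b d : R) (h : b * a * b = b) :
    ((∀ z : R, b * z = 0 → d * z = 0) → d = d * a * b ∧
      {x : R | ∃ r, x = r * d} ⊆ {x : R | ∃ r, x = r * b}) ∧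
    ((∀ z : R, z * b = 0 → z * d = 0) → d = b * a * d ∧
      {x : R | ∃ r, x = d * r} ⊆ {x : R | ∃ r, x = b * r}) := by
  constructor
  · intro hr
    have h1 : b * (1 - a * b) = 0 := by
      rw [mul_sub, mul_one, ← mul_assoc, h, sub_self]
    have h2 : d * (1 - a * b) = 0 := hr _ h1
    have hd : d = d * a * b := by
      rw [mul_sub, mul_one, sub_eq_zero, ← mul_assoc] at h2
      exact h2
    refine ⟨hd, ?_⟩
    rintro x ⟨r, rfl⟩
    refine ⟨r * d * a, ?_⟩
    nth_rewrite 1 [hd]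
    simp [mul_assoc]
  · intro hl
    have h1 : (1 - b * a) * b = 0 := by rw [sub_mul, one_mul, h, sub_self]
    have h2 : (1 - b * a) * d = 0 := hl _ h1
    have hd : d = b * a * d := by
      rw [sub_mul, one_mul, sub_eq_zero] at h2
      exact h2
    refine ⟨hd, ?_⟩
    rintro x ⟨r, rfl⟩
    refine ⟨a * d * r, ?_⟩
    nth_rewrite 1 [hd]
    simp [mul_assoc]
end

section
/- Let R be a unitary ring, a, b, d ∈ R with b an outer inverse of a and d regular (there exists d̄ with d d̄ d = d). If the right annihilator of d is contained in the right annihilator of b, then Rb ⊆ Rd; if the left annihilator of d is contained in the left annihilator of b, then bR ⊆ dR. -/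
theorem annihilator_containment_regular {R : Type*} [Ring R] (a b d : R)
    (h : b * a * b = b) (hreg : ∃ dbar, d * dbar * d = d) :
    ((∀ z : R, d * z = 0 → b * z = 0) →
      {x : R | ∃ r, x = r * b} ⊆ {x : R | ∃ r, x = r * d}) ∧
    ((∀ z : R, z * d = 0 → z * b = 0) →
      {x : R | ∃ r, x = b * r} ⊆ {x : R | ∃ r, x = d * r}) := by
  obtain ⟨e, he⟩ := hreg
  constructor
  · intro hz x ⟨r, hr⟩
    have h1 : d * (1 - e * d) = 0 := by
      have : d * (1 - e * d) = d - d * e * d := by noncomm_ring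
      rw [this, he, sub_self]
    have h2 := hz _ h1
    have hb : b = b * e * d := by
      have : b * (1 - e * d) = b - b * e * d := by noncomm_ring
      rw [this, sub_eq_zero] at h2; exact h2
    exact ⟨r * (b * e), by rw [hr]; nth_rewrite 1 [hb]; noncomm_ring⟩
  · intro hz x ⟨r, hr⟩
    have h1 : (1 - d * e) * d = 0 := by
      have : (1 - d * e) * d = d - d * e * d := by noncomm_ring
      rw [this, he, sub_self]
    have h2 := hz _ h1
    have hb : b = d * (e * b) := by
      have : (1 - d * e) * b = b - d * (e * b) := by noncomm_ring
      rw [this, sub_eq_zero] at h2; exact h2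
    exact ⟨e * b * r, by rw [hr]; nth_rewrite 1 [hb]; noncomm_ring⟩
end

section
/- Let R be a unitary ring, a, b, d ∈ R with b an outer inverse of a. Then b is the inverse of a along d (i.e., bR = dR and Rb = Rd) if and only if Rd = Rb, bR ⊆ dR, and the left annihilator of b is contained in the left annihilator of d. -/
theorem inverse_along_characterization {R : Type*} [Ring R] (a b d : R) (h : b * a * b = b) :
    ({x : R | ∃ r, x = b * r} = {x : R | ∃ r, x = d * r} ∧
      {x : R | ∃ r, x = r * b} = {x : R | ∃ r, x = r * d}) ↔
    ({x : R | ∃ r, x = r * d} = {x : R | ∃ r, x = r * b} ∧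
      {x : R | ∃ r, x = b * r} ⊆ {x : R | ∃ r, x = d * r} ∧
      (∀ z : R, z * b = 0 → z * d = 0)) := by
  constructor
  · rintro ⟨h1, h2⟩
    refine ⟨h2.symm, h1.le, ?_⟩
    have hd : d ∈ {x : R | ∃ r, x = b * r} := by
      rw [h1]; exact ⟨1, (mul_one d).symm⟩
    obtain ⟨r, hr⟩ := hd
    intro z hz
    rw [hr, ← mul_assoc, hz, zero_mul]
  · rintro ⟨h1, h2, h3⟩
    have key : (1 - b * a) * b = 0 := by rw [sub_mul, one_mul, h, sub_self]
    have hd : (1 - b * a) * d = 0 := h3 _ key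
    have hd' : d = b * (a * d) := by
      rw [sub_mul, one_mul, sub_eq_zero, mul_assoc] at hd
      exact hd
    refine ⟨?_, h1.symm⟩
    apply le_antisymm h2
    rintro x ⟨r, rfl⟩
    exact ⟨a * (d * r), by rw [← mul_assoc a, ← mul_assoc, ← hd']⟩
end

section
/- Let R be a unitary ring, a, b, d ∈ R with b an outer inverse of a and d regular. Then b is the inverse of a along d if and only if the right annihilator of b equals the right annihilator of d and the left annihilator of b equals the left annihilator of d. -/
theorem inverse_along_annihilators {R : Type*} [Ring R] (a b d : R)
    (h : b * a * b = b) (hreg : ∃ dbar, d * dbar * d = d) :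
    ({x : R | ∃ r, x = b * r} = {x : R | ∃ r, x = d * r} ∧
      {x : R | ∃ r, x = r * b} = {x : R | ∃ r, x = r * d}) ↔
    ({z : R | b * z = 0} = {z : R | d * z = 0} ∧
      {z : R | z * b = 0} = {z : R | z * d = 0}) := by
  obtain ⟨e, he⟩ := hreg
  constructor
  · rintro ⟨hR, hL⟩
    have hb1 : (b : R) ∈ {x : R | ∃ r, x = b * r} := ⟨1, by noncomm_ring⟩
    have hd1 : (d : R) ∈ {x : R | ∃ r, x = d * r} := ⟨1, by noncomm_ring⟩
    have hb2 : (b : R) ∈ {x : R | ∃ r, x = r * b} := ⟨1, by noncomm_ring⟩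
    have hd2 : (d : R) ∈ {x : R | ∃ r, x = r * d} := ⟨1, by noncomm_ring⟩
    obtain ⟨s, hs⟩ : (b : R) ∈ {x : R | ∃ r, x = d * r} := hR ▸ hb1
    obtain ⟨t, ht⟩ : (d : R) ∈ {x : R | ∃ r, x = b * r} := hR.symm ▸ hd1
    obtain ⟨u, hu⟩ : (b : R) ∈ {x : R | ∃ r, x = r * d} := hL ▸ hb2
    obtain ⟨v, hv⟩ : (d : R) ∈ {x : R | ∃ r, x = r * b} := hL.symm ▸ hd2
    constructor
    · ext z
      simp only [Set.mem_setOf_eq]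
      constructor
      · intro hz
        calc d * z = v * b * z := by rw [← hv]
        _ = v * (b * z) := by rw [mul_assoc]
        _ = 0 := by rw [hz, mul_zero]
      · intro hz
        calc b * z = u * d * z := by rw [← hu]
        _ = u * (d * z) := by rw [mul_assoc]
        _ = 0 := by rw [hz, mul_zero]
    · ext z
      simp only [Set.mem_setOf_eq]
      constructor
      · intro hz
        calc z * d = z * (b * t) := by rw [← ht]
        _ = z * b * t := by rw [mul_assoc]
        _ = 0 := by rw [hz, zero_mul]
      · intro hz
        calc z * b = z * (d * s) := by rw [← hs]
        _ = z * d * s := by rw [mul_assoc]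
        _ = 0 := by rw [hz, zero_mul]
  · rintro ⟨hR, hL⟩
    have h1 : b * (1 - a * b) = 0 := by
      have h' : b * (1 - a * b) = b - b * a * b := by noncomm_ring
      rw [h', h, sub_self]
    have hd_ab : d * (1 - a * b) = 0 :=
      (Set.ext_iff.mp hR (1 - a * b)).mp h1
    have h2 : (1 - b * a) * b = 0 := by
      have h' : (1 - b * a) * b = b - b * a * b := by noncomm_ring
      rw [h', h, sub_self]
    have hba_d : (1 - b * a) * d = 0 :=
      (Set.ext_iff.mp hL (1 - b * a)).mp h2
    have h3 : d * (1 - e * d) = 0 := by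
      have h' : d * (1 - e * d) = d - d * e * d := by noncomm_ring
      rw [h', he, sub_self]
    have hb_ed : b * (1 - e * d) = 0 :=
      (Set.ext_iff.mp hR (1 - e * d)).mpr h3
    have h4 : (1 - d * e) * d = 0 := by
      have h' : (1 - d * e) * d = d - d * e * d := by noncomm_ring
      rw [h', he, sub_self]
    have hde_b : (1 - d * e) * b = 0 :=
      (Set.ext_iff.mp hL (1 - d * e)).mpr h4
    have hdeq1 : d = b * (a * d) := by
      have h' : d - b * a * d = 0 := by
        have h'' : (1 - b * a) * d = d - b * a * d := by noncomm_ring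
        rw [← h'']; exact hba_d
      have h''' := sub_eq_zero.mp h'
      rw [mul_assoc] at h'''
      exact h'''
    have hbeq1 : b = d * (e * b) := by
      have h' : b - d * e * b = 0 := by
        have h'' : (1 - d * e) * b = b - d * e * b := by noncomm_ring
        rw [← h'']; exact hde_b
      have h''' := sub_eq_zero.mp h'
      rw [mul_assoc] at h'''
      exact h'''
    have hdeq2 : d = d * a * b := by
      have h' : d - d * (a * b) = 0 := by
        have h'' : d * (1 - a * b) = d - d * (a * b) := by noncomm_ring
        rw [← h'']; exact hd_ab
      have h''' := sub_eq_zero.mp h'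
      rw [← mul_assoc] at h'''
      exact h'''
    have hbeq2 : b = b * e * d := by
      have h' : b - b * (e * d) = 0 := by
        have h'' : b * (1 - e * d) = b - b * (e * d) := by noncomm_ring
        rw [← h'']; exact hb_ed
      have h''' := sub_eq_zero.mp h'
      rw [← mul_assoc] at h'''
      exact h'''
    constructor
    · ext x
      simp only [Set.mem_setOf_eq]
      constructor
      · rintro ⟨r, rfl⟩
        refine ⟨e * b * r, ?_⟩
        conv_lhs => rw [hbeq1]
        rw [mul_assoc, mul_assoc]
      · rintro ⟨r, rfl⟩
        refine ⟨a * d * r, ?_⟩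
        conv_lhs => rw [hdeq1]
        rw [mul_assoc, mul_assoc]
    · ext x
      simp only [Set.mem_setOf_eq]
      constructor
      · rintro ⟨r, rfl⟩
        refine ⟨r * b * e, ?_⟩
        conv_lhs => rw [hbeq2]
        rw [← mul_assoc, ← mul_assoc]
      · rintro ⟨r, rfl⟩
        refine ⟨r * d * a, ?_⟩
        conv_lhs => rw [hdeq2]
        rw [← mul_assoc, ← mul_assoc]
end

section
/- Let R be a unitary ring and let a, d ∈ R with d regular with inner inverse d̄ (d d̄ d = d). If a is invertible along d and x ∈ d d̄ R d d̄ satisfies (d a d d̄)x = d d̄ = x(d a d d̄), then the inverse of a along d equals xd. -/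
def IsInvAlong {R : Type*} [Ring R] (b a d : R) : Prop :=
  b * a * b = b ∧ {x | ∃ r, x = b * r} = {x | ∃ r, x = d * r} ∧
    {x | ∃ r, x = r * b} = {x | ∃ r, x = r * d}

theorem inv_along_eq_xd {R : Type*} [Ring R] (a b d dbar x : R)
    (hreg : d * dbar * d = d) (hb : IsInvAlong b a d)
    (hx : ∃ r, x = d * dbar * r * (d * dbar))
    (h1 : d * a * d * dbar * x = d * dbar) (h2 : x * (d * a * d * dbar) = d * dbar) :
    b = x * d := by
  obtain ⟨hbab, hR, hL⟩ := hb
  -- b = d * s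
  have hbmem : b ∈ {x | ∃ r, x = b * r} := ⟨1, by noncomm_ring⟩
  rw [hR] at hbmem
  obtain ⟨s, hs⟩ := hbmem
  -- d = v * b
  have hdmem : d ∈ {x | ∃ r, x = r * d} := ⟨1, by noncomm_ring⟩
  rw [← hL] at hdmem
  obtain ⟨v, hv⟩ := hdmem
  -- d * dbar * b = b
  have hddb : d * dbar * b = b := by
    rw [hs]; rw [show d * dbar * (d * s) = d * dbar * d * s by noncomm_ring, hreg]
  -- d * a * b = d
  have hdab : d * a * b = d := by
    calc d * a * b = v * (b * a * b) := by rw [hv]; noncomm_ring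
    _ = v * b := by rw [hbab]
    _ = d := hv.symm
  calc b = d * dbar * b := hddb.symm
    _ = x * (d * a * d * dbar) * b := by rw [h2]
    _ = x * (d * a * (d * dbar * b)) := by noncomm_ring
    _ = x * (d * a * b) := by rw [hddb]
    _ = x * d := by rw [hdab]
end

section
/- Let R be a unitary ring, a, d ∈ R, d regular with inner inverse d̄. If b ∈ R is an outer inverse of a satisfying bR = dR and Rb = Rd (so b = a^{∥d}), then d a d d̄ is invertible in the corner ring d d̄ R d d̄ (with identity d d̄). -/
theorem corner_invertible {R : Type*} [Ring R] (a b d dbar : R)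
    (hreg : d * dbar * d = d) (hb : IsInvAlong b a d) :
    ∃ x : R, (∃ r, x = d * dbar * r * (d * dbar)) ∧
      d * a * d * dbar * x = d * dbar ∧ x * (d * a * d * dbar) = d * dbar := by
  obtain ⟨hout, hR, hL⟩ := hb
  obtain ⟨s, hs⟩ : ∃ r, b = d * r := by
    have : b ∈ {x | ∃ r, x = d * r} := by rw [← hR]; exact ⟨1, (mul_one b).symm⟩
    exact this
  obtain ⟨t, ht⟩ : ∃ r, d = b * r := by
    have : d ∈ {x | ∃ r, x = b * r} := by rw [hR]; exact ⟨1, (mul_one d).symm⟩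
    exact this
  obtain ⟨u, hu⟩ : ∃ r, b = r * d := by
    have : b ∈ {x | ∃ r, x = r * d} := by rw [← hL]; exact ⟨1, (one_mul b).symm⟩
    exact this
  obtain ⟨v, hv⟩ : ∃ r, d = r * b := by
    have : d ∈ {x | ∃ r, x = r * b} := by rw [hL]; exact ⟨1, (one_mul d).symm⟩
    exact this
  have h1 : d * dbar * b = b := by
    conv_lhs => rw [hs, ← mul_assoc, hreg]
    exact hs.symm
  have h2 : b * dbar * d = b := by
    conv_lhs => rw [hu, mul_assoc, mul_assoc, ← mul_assoc d dbar d, hreg]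
    exact hu.symm
  have h3 : b * a * d = d := by
    conv_lhs => rw [ht, ← mul_assoc, hout]
    exact ht.symm
  have h4 : d * a * b = d := by
    conv_lhs => rw [hv, mul_assoc, mul_assoc, ← mul_assoc b a b, hout]
    exact hv.symm
  refine ⟨b * dbar, ⟨b * dbar, ?_⟩, ?_, ?_⟩
  · calc b * dbar = (b * dbar * d) * dbar := by rw [h2]
    _ = (d * dbar * b) * dbar * d * dbar := by rw [h1, h2]
    _ = d * dbar * (b * dbar) * (d * dbar) := by noncomm_ring
  · calc d * a * d * dbar * (b * dbar) = d * a * (d * dbar * b) * dbar := by noncomm_ring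
    _ = d * dbar := by rw [h1, h4]
  · calc b * dbar * (d * a * d * dbar) = (b * dbar * d) * a * d * dbar := by noncomm_ring
    _ = b * a * d * dbar := by rw [h2]
    _ = d * dbar := by rw [h3]
end

section
/- Let R be a unitary ring and p ∈ R an idempotent. For a ∈ R, a is invertible along p if and only if pap is invertible in the corner ring pRp (with identity p). Moreover, in this case a^{∥p} equals the inverse of pap in pRp. -/
lemma isInvAlong_props {R : Type*} [Ring R] {a p b : R} (hp : p * p = p)
    (h : IsInvAlong b a p) :
    p * b = b ∧ b * p = b ∧ p * a * p * b = p ∧ b * (p * a * p) = p := by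
  obtain ⟨hbab, hL, hR⟩ := h
  obtain ⟨r, hr⟩ := (Set.ext_iff.mp hL b).mp ⟨1, (mul_one b).symm⟩
  have hpb : p * b = b := by rw [hr, ← mul_assoc, hp]
  obtain ⟨s, hs⟩ := (Set.ext_iff.mp hR b).mp ⟨1, (one_mul b).symm⟩
  have hbp : b * p = b := by rw [hs, mul_assoc, hp]
  obtain ⟨t, ht⟩ := (Set.ext_iff.mp hL p).mpr ⟨1, (mul_one p).symm⟩
  obtain ⟨u, hu⟩ := (Set.ext_iff.mp hR p).mpr ⟨1, (one_mul p).symm⟩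
  refine ⟨hpb, hbp, ?_, ?_⟩
  · calc p * a * p * b = p * a * b := by rw [mul_assoc (p*a), hpb]
      _ = u * b * a * b := by rw [← hu]
      _ = u * (b * a * b) := by noncomm_ring
      _ = p := by rw [hbab, ← hu]
  · calc b * (p * a * p) = b * a * p := by rw [← mul_assoc, ← mul_assoc, hbp]
      _ = b * a * (b * t) := by rw [← ht]
      _ = (b * a * b) * t := by noncomm_ring
      _ = p := by rw [hbab, ← ht]

theorem inv_along_idempotent {R : Type*} [Ring R] (a p : R) (hp : p * p = p) :
    ((∃ b, IsInvAlong b a p) ↔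
      ∃ x : R, (∃ r, x = p * r * p) ∧ p * a * p * x = p ∧ x * (p * a * p) = p) ∧
    (∀ b x : R, IsInvAlong b a p → (∃ r, x = p * r * p) →
      p * a * p * x = p → x * (p * a * p) = p → b = x) := by
  constructor
  · constructor
    · rintro ⟨b, hb⟩
      obtain ⟨hpb, hbp, h1, h2⟩ := isInvAlong_props hp hb
      exact ⟨b, ⟨b, by rw [hpb, hbp]⟩, h1, h2⟩
    · rintro ⟨x, ⟨r, hr⟩, h1, h2⟩
      have hxp : x * p = x := by rw [hr, mul_assoc, hp]
      have hpx : p * x = x := by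
        rw [hr]; rw [show p * (p * r * p) = p * p * r * p by noncomm_ring, hp]
      refine ⟨x, ?_, ?_, ?_⟩
      · have key : x * (p * a * p) * x = x * a * x := by
          rw [show x * (p * a * p) * x = (x * p) * a * (p * x) by noncomm_ring, hxp, hpx]
        rw [← key, h2, hpx]
      · ext y
        simp only [Set.mem_setOf_eq]
        constructor
        · rintro ⟨s, rfl⟩
          exact ⟨r * p * s, by rw [hr]; noncomm_ring⟩
        · rintro ⟨s, rfl⟩
          exact ⟨p * a * p * s, by rw [← mul_assoc, h2]⟩
      · ext y
        simp only [Set.mem_setOf_eq]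
        constructor
        · rintro ⟨s, rfl⟩
          exact ⟨s * p * r, by rw [hr]; noncomm_ring⟩
        · rintro ⟨s, rfl⟩
          exact ⟨s * (p * a * p), by rw [mul_assoc, h1]⟩
  · rintro b x hb ⟨r, hr⟩ h1 h2
    obtain ⟨hpb, hbp, hb1, hb2⟩ := isInvAlong_props hp hb
    have hxp : x * p = x := by rw [hr, mul_assoc, hp]
    calc b = p * b := hpb.symm
      _ = (x * (p * a * p)) * b := by rw [h2]
      _ = x * (p * a * p * b) := by noncomm_ring
      _ = x := by rw [hb1, hxp]
end

section
/- Let R be a unitary ring, a, d ∈ R, d regular with inner inverse d̄, and suppose a is invertible along d. Then for any x, y ∈ R, the element a + x(1 − d d̄) + (1 − d̄ d)y is invertible along d, and its inverse along d equals a^{∥d}. -/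
theorem inv_along_perturbation {R : Type*} [Ring R] (a b d dbar x y : R)
    (hreg : d * dbar * d = d) (hb : IsInvAlong b a d) :
    IsInvAlong b (a + x * (1 - d * dbar) + (1 - dbar * d) * y) d := by
  obtain ⟨h1, h2, h3⟩ := hb
  -- b ∈ dR
  have hbr : ∃ r, b = d * r := by
    have : b ∈ {x | ∃ r, x = b * r} := ⟨1, by simp⟩
    rw [h2] at this; exact this
  have hbl : ∃ s, b = s * d := by
    have : b ∈ {x | ∃ r, x = r * b} := ⟨1, by simp⟩
    rw [h3] at this; exact this
  obtain ⟨r, hr⟩ := hbr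
  obtain ⟨s, hs⟩ := hbl
  have e1 : (1 - d * dbar) * b = 0 := by
    rw [hr, sub_mul, one_mul, ← mul_assoc, hreg, sub_self]
  have e2 : b * (1 - dbar * d) = 0 := by
    rw [hs, mul_sub, mul_one, mul_assoc s, ← mul_assoc d, hreg, sub_self]
  refine ⟨?_, h2, h3⟩
  have : b * (a + x * (1 - d * dbar) + (1 - dbar * d) * y) * b
      = b * a * b + b * (x * ((1 - d * dbar) * b)) + (b * (1 - dbar * d)) * (y * b) := by
    noncomm_ring
  rw [this, e1, e2, h1]
  simp
end

section
/- Let R be a unitary ring, a, d ∈ R, d regular with inner inverse d̄. Then a is invertible along d if and only if a d d̄ is invertible along d, if and only if d̄ d a is invertible along d; and in this case a^{∥d} = (a d d̄)^{∥d} = (d̄ d a)^{∥d}. -/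
private lemma right_mem {R : Type*} [Ring R] {b d : R}
    (h : {x | ∃ r, x = b * r} = {x : R | ∃ r, x = d * r}) : ∃ s, b = d * s := by
  have hb : b ∈ {x : R | ∃ r, x = b * r} := ⟨1, (mul_one b).symm⟩
  rw [h] at hb; exact hb

private lemma left_mem {R : Type*} [Ring R] {b d : R}
    (h : {x | ∃ r, x = r * b} = {x : R | ∃ r, x = r * d}) : ∃ s, b = s * d := by
  have hb : b ∈ {x : R | ∃ r, x = r * b} := ⟨1, (one_mul b).symm⟩
  rw [h] at hb; exact hb

private lemma uniq_inv_along {R : Type*} [Ring R] {a d b c : R}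
    (hb : IsInvAlong b a d) (hc : IsInvAlong c a d) : b = c := by
  obtain ⟨hb1, hbR, hRb⟩ := hb
  obtain ⟨hc1, hcR, hRc⟩ := hc
  obtain ⟨r, hr⟩ := left_mem hRb        -- b = r * d
  obtain ⟨w, hw⟩ := left_mem hRc.symm   -- d = w * c
  obtain ⟨s, hs⟩ := right_mem hcR       -- c = d * s
  obtain ⟨t, ht⟩ := right_mem hbR.symm  -- d = b * t
  have hx : b = (r * w) * c := by rw [hr, hw, mul_assoc]
  have hy : c = b * (t * s) := by rw [hs, ht, mul_assoc]
  have e1 : b * a * c = b := by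
    conv_lhs => rw [hx]
    rw [mul_assoc, mul_assoc, ← mul_assoc c a c, hc1, ← hx]
  have e2 : b * a * c = c := by
    conv_lhs => rw [hy]
    rw [← mul_assoc, hb1, ← hy]
  exact e1.symm.trans e2

private lemma iff_right {R : Type*} [Ring R] {a d dbar b : R} (hreg : d * dbar * d = d) :
    IsInvAlong b a d ↔ IsInvAlong b (a * (d * dbar)) d := by
  have key : {x | ∃ r, x = b * r} = {x : R | ∃ r, x = d * r} →
      b * (a * (d * dbar)) * b = b * a * b := by
    intro h2
    obtain ⟨s, hs⟩ := right_mem h2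
    have hdb : d * dbar * b = b := by rw [hs, ← mul_assoc, hreg]
    rw [show b * (a * (d * dbar)) * b = b * a * (d * dbar * b) by noncomm_ring, hdb]
  constructor
  · rintro ⟨h1, h2, h3⟩
    exact ⟨by rw [key h2, h1], h2, h3⟩
  · rintro ⟨h1, h2, h3⟩
    exact ⟨by rw [← key h2, h1], h2, h3⟩

private lemma iff_left {R : Type*} [Ring R] {a d dbar b : R} (hreg : d * dbar * d = d) :
    IsInvAlong b a d ↔ IsInvAlong b (dbar * d * a) d := by
  have key : {x | ∃ r, x = r * b} = {x : R | ∃ r, x = r * d} →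
      b * (dbar * d * a) * b = b * a * b := by
    intro h3
    obtain ⟨s, hs⟩ := left_mem h3
    have hbd : b * (dbar * d) = b := by
      rw [hs, mul_assoc, ← mul_assoc d dbar d, hreg]
    rw [show b * (dbar * d * a) * b = b * (dbar * d) * a * b by noncomm_ring, hbd]
  constructor
  · rintro ⟨h1, h2, h3⟩
    exact ⟨by rw [key h3, h1], h2, h3⟩
  · rintro ⟨h1, h2, h3⟩
    exact ⟨by rw [← key h3, h1], h2, h3⟩

theorem inv_along_addd {R : Type*} [Ring R] (a d dbar : R) (hreg : d * dbar * d = d) :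
    ((∃ b, IsInvAlong b a d) ↔ (∃ b, IsInvAlong b (a * (d * dbar)) d)) ∧
    ((∃ b, IsInvAlong b a d) ↔ (∃ b, IsInvAlong b (dbar * d * a) d)) ∧
    (∀ b c : R, IsInvAlong b a d → IsInvAlong c (a * (d * dbar)) d → b = c) ∧
    (∀ b c : R, IsInvAlong b a d → IsInvAlong c (dbar * d * a) d → b = c) := by
  refine ⟨⟨fun ⟨b, hb⟩ => ⟨b, (iff_right hreg).mp hb⟩,
      fun ⟨b, hb⟩ => ⟨b, (iff_right hreg).mpr hb⟩⟩,
    ⟨fun ⟨b, hb⟩ => ⟨b, (iff_left hreg).mp hb⟩,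
      fun ⟨b, hb⟩ => ⟨b, (iff_left hreg).mpr hb⟩⟩,
    fun b c hb hc => uniq_inv_along hb ((iff_right hreg).mpr hc),
    fun b c hb hc => uniq_inv_along hb ((iff_left hreg).mpr hc)⟩
end

section
/- Let R be a unitary ring and p an idempotent. Then a ∈ R is invertible along p if and only if there exist unique s, t ∈ R such that a = s + t, s is group invertible with spectral idempotent 1 − p (equivalently s is invertible in pRp), and ptp = 0. In this case a^{∥p} = s^#. -/
/-- Auxiliary: the basic consequences of `IsInvAlong b a p` for idempotent `p`. -/
lemma isInvAlong_facts {R : Type*} [Ring R] {b a p : R} (hp : p * p = p)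
    (h : IsInvAlong b a p) :
    p * b = b ∧ b * p = b ∧ p * a * b = p ∧ b * a * p = p := by
  obtain ⟨hbab, hL, hR⟩ := h
  obtain ⟨u, hu⟩ : ∃ u, b = p * u := by
    have hb : b ∈ {x | ∃ r, x = b * r} := ⟨1, (mul_one b).symm⟩
    rw [hL] at hb; exact hb
  obtain ⟨v, hv⟩ : ∃ v, p = b * v := by
    have hpmem : p ∈ {x | ∃ r, x = p * r} := ⟨1, (mul_one p).symm⟩
    rw [← hL] at hpmem; exact hpmem
  obtain ⟨w, hw⟩ : ∃ w, b = w * p := by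
    have hb : b ∈ {x | ∃ r, x = r * b} := ⟨1, (one_mul b).symm⟩
    rw [hR] at hb; exact hb
  obtain ⟨z, hz⟩ : ∃ z, p = z * b := by
    have hpmem : p ∈ {x | ∃ r, x = r * p} := ⟨1, (one_mul p).symm⟩
    rw [← hR] at hpmem; exact hpmem
  have hpb : p * b = b := by rw [hu, ← mul_assoc, hp]
  have hbp : b * p = b := by rw [hw, mul_assoc, hp]
  have hpab : p * a * b = p := by
    calc p * a * b = z * b * a * b := by rw [← hz]
    _ = z * (b * a * b) := by rw [mul_assoc, mul_assoc, mul_assoc]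
    _ = z * b := by rw [hbab]
    _ = p := hz.symm
  have hbap : b * a * p = p := by
    calc b * a * p = b * a * (b * v) := by rw [← hv]
    _ = b * a * b * v := by rw [mul_assoc (b*a)]
    _ = p := by rw [hbab, ← hv]
  exact ⟨hpb, hbp, hpab, hbap⟩

theorem inv_along_idem_decomposition {R : Type*} [Ring R] (a p : R) (hp : p * p = p) :
    ((∃ b, IsInvAlong b a p) ↔
      (∃! st : R × R, a = st.1 + st.2 ∧
        (∃ s' : R, st.1 * s' * st.1 = st.1 ∧ s' * st.1 * s' = s' ∧
          st.1 * s' = s' * st.1 ∧ s' * st.1 = p) ∧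
        p * st.2 * p = 0)) ∧
    (∀ b s t s' : R, IsInvAlong b a p → a = s + t →
      s * s' * s = s → s' * s * s' = s' → s * s' = s' * s → s' * s = p →
      p * t * p = 0 → b = s') := by
  constructor
  · constructor
    · rintro ⟨b, hb⟩
      obtain ⟨hpb, hbp, hpab, hbap⟩ := isInvAlong_facts hp hb
      obtain ⟨hbab, -, -⟩ := hb
      have hp' : ∀ x : R, p * (p * x) = p * x := fun x => by rw [← mul_assoc, hp]
      have hpb' : ∀ x : R, p * (b * x) = b * x := fun x => by rw [← mul_assoc, hpb]
      have hbp' : ∀ x : R, b * (p * x) = b * x := fun x => by rw [← mul_assoc, hbp]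
      have hpabA : p * (a * b) = p := by rw [← mul_assoc]; exact hpab
      have hbapA : b * (a * p) = p := by rw [← mul_assoc]; exact hbap
      have hbabA : b * (a * b) = b := by rw [← mul_assoc]; exact hbab
      have hpab' : ∀ x : R, p * (a * (b * x)) = p * x := fun x => by
        rw [← mul_assoc, ← mul_assoc, hpab]
      have hbap' : ∀ x : R, b * (a * (p * x)) = p * x := fun x => by
        rw [← mul_assoc, ← mul_assoc, hbap]
      have hbab' : ∀ x : R, b * (a * (b * x)) = b * x := fun x => by
        rw [← mul_assoc, ← mul_assoc, hbab]
      refine ⟨(p * a * p, a - p * a * p), ⟨by simp, ⟨b, ?_, ?_, ?_, ?_⟩, ?_⟩, ?_⟩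
      · simp only [mul_assoc, hp, hp', hpb, hpb', hbp, hbp', hpabA, hpab', hbapA, hbap',
          hbabA, hbab']
      · simp only [mul_assoc, hp, hp', hpb, hpb', hbp, hbp', hpabA, hpab', hbapA, hbap',
          hbabA, hbab']
      · simp only [mul_assoc, hp, hp', hpb, hpb', hbp, hbp', hpabA, hpab', hbapA, hbap',
          hbabA, hbab']
      · simp only [mul_assoc, hp, hp', hpb, hpb', hbp, hbp', hpabA, hpab', hbapA, hbap',
          hbabA, hbab']
      · simp only [mul_sub, sub_mul, mul_assoc, hp, hp', sub_self]
      · rintro ⟨s, t⟩ ⟨hsum, ⟨s', h1, h2, h3, h4⟩, ht⟩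
        have hss' : s * s' = p := h3.trans h4
        have hps : p * s = s := by rw [← hss']; exact h1
        have hsp : s * p = s := by rw [← h4, ← mul_assoc]; exact h1
        have hs : p * a * p = s := by
          rw [hsum, mul_add, add_mul, hps, hsp, ht, add_zero]
        have ht2 : t = a - p * a * p := by rw [hs, hsum]; abel
        simp only [Prod.mk.injEq]
        exact ⟨hs.symm, ht2⟩
    · rintro ⟨⟨s, t⟩, ⟨hsum, ⟨s', h1, h2, h3, h4⟩, ht⟩, -⟩
      dsimp only at hsum h1 h2 h3 h4 ht
      have hss' : s * s' = p := h3.trans h4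
      have hps' : p * s' = s' := by rw [← h4]; exact h2
      have hs'p : s' * p = s' := by rw [← hss', ← mul_assoc]; exact h2
      refine ⟨s', ?_, ?_, ?_⟩
      · have h0 : s' * t * s' = 0 := by
          calc s' * t * s' = (s' * p) * t * (p * s') := by rw [hs'p, hps']
          _ = s' * (p * t * p) * s' := by simp only [mul_assoc]
          _ = 0 := by rw [ht, mul_zero, zero_mul]
        rw [hsum, mul_add, add_mul, h0, add_zero, mul_assoc, ← mul_assoc s' s, h2]
      · ext x
        simp only [Set.mem_setOf_eq]
        constructor
        · rintro ⟨r, rfl⟩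
          exact ⟨s' * r, by rw [← mul_assoc, hps']⟩
        · rintro ⟨r, rfl⟩
          exact ⟨s * r, by rw [← mul_assoc, h4]⟩
      · ext x
        simp only [Set.mem_setOf_eq]
        constructor
        · rintro ⟨r, rfl⟩
          exact ⟨r * s', by rw [mul_assoc, hs'p]⟩
        · rintro ⟨r, rfl⟩
          exact ⟨r * s, by rw [mul_assoc, hss']⟩
  · intro b s t s' hb hsum h1 h2 h3 h4 ht
    obtain ⟨hpb, hbp, hpab, hbap⟩ := isInvAlong_facts hp hb
    have hss' : s * s' = p := h3.trans h4
    have hps : p * s = s := by rw [← hss']; exact h1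
    have hsp : s * p = s := by rw [← h4, ← mul_assoc]; exact h1
    have hs : p * a * p = s := by
      rw [hsum, mul_add, add_mul, hps, hsp, ht, add_zero]
    have hbs : b * s = p := by
      rw [← hs, ← mul_assoc, ← mul_assoc, hbp]
      exact hbap
    calc b = b * p := hbp.symm
    _ = b * (s * s') := by rw [hss']
    _ = (b * s) * s' := (mul_assoc _ _ _).symm
    _ = p * s' := by rw [hbs]
    _ = s' := by rw [← h4]; exact h2
end

section
/- Let R be a unitary ring, d ∈ R regular, a ∈ R, and u ∈ R invertible. Then a is invertible along d if and only if a u^{-1} is invertible along u d, and in this case (a u^{-1})^{∥ u d} = u · a^{∥ d}. -/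
lemma isInvAlong_unit_aux {R : Type*} [Ring R] (a d u v b : R)
    (huv : u * v = 1) (hvu : v * u = 1) (h : IsInvAlong b a d) :
    IsInvAlong (u * b) (a * v) (u * d) := by
  obtain ⟨h1, h2, h3⟩ := h
  refine ⟨?_, ?_, ?_⟩
  · have e : u * b * (a * v) * (u * b) = u * (b * a * ((v * u) * b)) := by noncomm_ring
    rw [e, hvu, one_mul, h1]
  · ext x
    simp only [Set.mem_setOf_eq]
    constructor
    · rintro ⟨r, rfl⟩
      obtain ⟨r', hr'⟩ := (Set.ext_iff.mp h2 (b * r)).mp ⟨r, rfl⟩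
      exact ⟨r', by rw [mul_assoc, hr', ← mul_assoc]⟩
    · rintro ⟨r, rfl⟩
      obtain ⟨r', hr'⟩ := (Set.ext_iff.mp h2 (d * r)).mpr ⟨r, rfl⟩
      exact ⟨r', by rw [mul_assoc, hr', ← mul_assoc]⟩
  · ext x
    simp only [Set.mem_setOf_eq]
    constructor
    · rintro ⟨r, rfl⟩
      obtain ⟨r', hr'⟩ := (Set.ext_iff.mp h3 (r * u * b)).mp ⟨r * u, rfl⟩
      refine ⟨r' * v, ?_⟩
      calc r * (u * b) = r * u * b := by rw [mul_assoc]
        _ = r' * d := hr'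
        _ = r' * (v * u) * d := by rw [hvu, mul_one]
        _ = r' * v * (u * d) := by noncomm_ring
    · rintro ⟨r, rfl⟩
      obtain ⟨r', hr'⟩ := (Set.ext_iff.mp h3 (r * u * d)).mpr ⟨r * u, by rw [mul_assoc]⟩
      refine ⟨r' * v, ?_⟩
      calc r * (u * d) = r * u * d := by rw [mul_assoc]
        _ = r' * b := hr'
        _ = r' * (v * u) * b := by rw [hvu, mul_one]
        _ = r' * v * (u * b) := by noncomm_ring

theorem inv_along_unit {R : Type*} [Ring R] (a d u v : R)
    (hreg : ∃ dbar, d * dbar * d = d) (huv : u * v = 1) (hvu : v * u = 1) :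
    ((∃ b, IsInvAlong b a d) ↔ (∃ b, IsInvAlong b (a * v) (u * d))) ∧
    (∀ b : R, IsInvAlong b a d → IsInvAlong (u * b) (a * v) (u * d)) := by
  constructor
  · constructor
    · rintro ⟨b, hb⟩
      exact ⟨u * b, isInvAlong_unit_aux a d u v b huv hvu hb⟩
    · rintro ⟨b, hb⟩
      have := isInvAlong_unit_aux (a * v) (u * d) v u b hvu huv hb
      rw [mul_assoc, hvu, mul_one, ← mul_assoc, hvu, one_mul] at this
      exact ⟨v * b, this⟩
  · exact fun b hb => isInvAlong_unit_aux a d u v b huv hvu hb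
end

section
/- Let R be a unitary ring, d ∈ R regular, and a invertible along d. Then a^{∥d} a = a a^{∥d} if and only if d is group invertible and a commutes with the spectral idempotent p_d = 1 − d d^#. -/
theorem commuting_inv_along {R : Type*} [Ring R] (a b d : R)
    (hreg : ∃ dbar, d * dbar * d = d) (hb : IsInvAlong b a d) :
    b * a = a * b ↔
      ∃ ds : R, d * ds * d = d ∧ ds * d * ds = ds ∧ d * ds = ds * d ∧
        a * (1 - d * ds) = (1 - d * ds) * a := by
  obtain ⟨hbab, hR, hL⟩ := hb
  obtain ⟨s, hs⟩ : ∃ s, b = d * s := by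
    have : b ∈ {x | ∃ r, x = d * r} := hR ▸ ⟨1, (mul_one b).symm⟩
    exact this
  obtain ⟨r, hr⟩ : ∃ r, d = b * r := by
    have : d ∈ {x | ∃ r, x = b * r} := hR.symm ▸ ⟨1, (mul_one d).symm⟩
    exact this
  obtain ⟨t, ht⟩ : ∃ t, b = t * d := by
    have : b ∈ {x | ∃ r, x = r * d} := hL ▸ ⟨1, (one_mul b).symm⟩
    exact this
  obtain ⟨w, hw⟩ : ∃ w, d = w * b := by
    have : d ∈ {x | ∃ r, x = r * b} := hL.symm ▸ ⟨1, (one_mul d).symm⟩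
    exact this
  have hbad : b * a * d = d := by
    calc b * a * d = b * a * b * r := by rw [hr]; noncomm_ring
    _ = b * r := by rw [hbab]
    _ = d := hr.symm
  have hdab : d * a * b = d := by
    calc d * a * b = w * (b * a * b) := by rw [hw]; noncomm_ring
    _ = w * b := by rw [hbab]
    _ = d := hw.symm
  have hdy : d * a * t * d = d := by
    rw [mul_assoc, ← ht]; exact hdab
  have hdx : d * s * a * d = d := by
    rw [← hs]; exact hbad
  constructor
  · intro hcomm
    have h1 : d * (a * t * d * (s * a)) = b * a := by
      calc d * (a * t * d * (s * a)) = (d * a * t * d) * (s * a) := by noncomm_ring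
      _ = d * (s * a) := by rw [hdy]
      _ = d * s * a := (mul_assoc d s a).symm
      _ = b * a := by rw [← hs]
    have h2 : (a * t * d * (s * a)) * d = a * b := by
      calc (a * t * d * (s * a)) * d = a * t * (d * s * a * d) := by noncomm_ring
      _ = a * t * d := by rw [hdx]
      _ = a * (t * d) := mul_assoc a t d
      _ = a * b := by rw [← ht]
    refine ⟨a * t * d * (s * a), ?_, ?_, ?_, ?_⟩
    · calc d * (a * t * d * (s * a)) * d
          = (d * (a * t * d * (s * a))) * d := by noncomm_ring
        _ = b * a * d := by rw [h1]
        _ = d := hbad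
    · calc (a * t * d * (s * a)) * d * (a * t * d * (s * a))
          = a * t * (d * s * a * d) * a * t * d * (s * a) := by noncomm_ring
        _ = a * t * d * a * t * d * (s * a) := by rw [hdx]
        _ = a * t * (d * a * t * d) * (s * a) := by noncomm_ring
        _ = a * t * d * (s * a) := by rw [hdy]
    · rw [h1, h2, hcomm]
    · rw [h1, mul_sub, sub_mul, mul_one, one_mul, ← mul_assoc, ← hcomm]
  · rintro ⟨ds, h1, h2, h3, h4⟩
    have haf : a * (d * ds) = (d * ds) * a := by
      have h := h4
      rw [mul_sub, sub_mul, mul_one, one_mul] at h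
      exact sub_right_injective h
    have hdf : d * (d * ds) = d := by
      rw [h3, ← mul_assoc]; exact h1
    have hfb : (d * ds) * b = b := by
      rw [hs, ← mul_assoc, h1]
    have hbf : b * (d * ds) = b := by
      rw [ht, mul_assoc, hdf]
    have hab : a * b = d * ds := by
      calc a * b = a * ((d * ds) * b) := by rw [hfb]
      _ = (a * (d * ds)) * b := (mul_assoc a (d * ds) b).symm
      _ = ((d * ds) * a) * b := by rw [haf]
      _ = ds * (d * a * b) := by rw [h3]; noncomm_ring
      _ = ds * d := by rw [hdab]
      _ = d * ds := h3.symm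
    have hba : b * a = d * ds := by
      calc b * a = (b * (d * ds)) * a := by rw [hbf]
      _ = b * ((d * ds) * a) := mul_assoc b (d * ds) a
      _ = b * (a * (d * ds)) := by rw [← haf]
      _ = (b * a * d) * ds := by noncomm_ring
      _ = d * ds := by rw [hbad]
    rw [hab, hba]
end

section
/- Let R be a unitary ring, d ∈ R regular with inner inverse d̄, and a invertible along d. Then a^{∥d} a = a a^{∥d} if and only if da ∈ Rd and ad ∈ dR. -/
theorem commuting_inv_along_ideals {R : Type*} [Ring R] (a b d dbar : R)
    (hreg : d * dbar * d = d) (hb : IsInvAlong b a d) :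
    b * a = a * b ↔ ((∃ u, d * a = u * d) ∧ (∃ v, a * d = d * v)) := by
  obtain ⟨hbab, hR, hL⟩ := hb
  -- b = d * s
  obtain ⟨s, hs⟩ : b ∈ {x | ∃ r, x = d * r} := hR ▸ ⟨1, (mul_one b).symm⟩
  -- d = b * s'
  obtain ⟨s', hs'⟩ : d ∈ {x | ∃ r, x = b * r} := hR.symm ▸ ⟨1, (mul_one d).symm⟩
  -- b = t * d
  obtain ⟨t, ht⟩ : b ∈ {x | ∃ r, x = r * d} := hL ▸ ⟨1, (one_mul b).symm⟩
  -- d = t' * b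
  obtain ⟨t', ht'⟩ : d ∈ {x | ∃ r, x = r * b} := hL.symm ▸ ⟨1, (one_mul d).symm⟩
  have hbad : b * a * d = d := by
    calc b * a * d = b * a * b * s' := by rw [hs']; simp only [mul_assoc]
    _ = b * s' := by rw [hbab]
    _ = d := hs'.symm
  have hdab : d * a * b = d := by
    calc d * a * b = t' * (b * a * b) := by rw [ht']; simp only [mul_assoc]
    _ = t' * b := by rw [hbab]
    _ = d := ht'.symm
  constructor
  · intro h
    constructor
    · exact ⟨d * a * a * t, by
        calc d * a = d * a * b * a := by rw [hdab]
        _ = d * a * (b * a) := by simp only [mul_assoc]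
        _ = d * a * (a * b) := by rw [h]
        _ = d * a * a * (t * d) := by rw [← ht]; simp only [mul_assoc]
        _ = d * a * a * t * d := by simp only [mul_assoc]⟩
    · exact ⟨s * a * a * d, by
        calc a * d = a * (b * a * d) := by rw [hbad]
        _ = (a * b) * (a * d) := by simp only [mul_assoc]
        _ = (b * a) * (a * d) := by rw [h]
        _ = (d * s) * (a * (a * d)) := by rw [← hs]; simp only [mul_assoc]
        _ = d * (s * a * a * d) := by simp only [mul_assoc]⟩
  · rintro ⟨⟨u, hu⟩, ⟨v, hv⟩⟩
    have hab : a * b = d * (v * s) := by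
      calc a * b = (a * d) * s := by rw [hs]; simp only [mul_assoc]
      _ = d * (v * s) := by rw [hv]; simp only [mul_assoc]
    have hba : b * a = (t * u) * d := by
      calc b * a = t * (d * a) := by rw [ht]; simp only [mul_assoc]
      _ = (t * u) * d := by rw [hu]; simp only [mul_assoc]
    have h1 : b * a * (a * b) = a * b := by
      calc b * a * (a * b) = (b * a * d) * (v * s) := by rw [hab]; simp only [mul_assoc]
      _ = d * (v * s) := by rw [hbad]
      _ = a * b := hab.symm
    have h2 : b * a * (a * b) = b * a := by
      calc b * a * (a * b) = (t * u) * (d * a * b) := by rw [hba]; simp only [mul_assoc]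
      _ = (t * u) * d := by rw [hdab]
      _ = b * a := hba.symm
    rw [← h1, h2]
end

section
/- Let R be a unitary ring with involution * and a ∈ R Moore-Penrose invertible. Then a is EP (i.e., a a† = a† a) if and only if a a* ∈ a* R and a* a ∈ R a*. -/
theorem ep_characterization {R : Type*} [Ring R] [StarRing R] (a ad : R)
    (h1 : a * ad * a = a) (h2 : ad * a * ad = ad)
    (h3 : star (a * ad) = a * ad) (h4 : star (ad * a) = ad * a) :
    a * ad = ad * a ↔
      ((∃ r, a * star a = star a * r) ∧ (∃ r, star a * a = r * star a)) := by
  have k1 : star a * star ad = ad * a := by rw [← star_mul, h4]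
  have k2 : star ad * star a = a * ad := by rw [← star_mul, h3]
  have k3 : ad * a * star a = star a := by
    calc ad * a * star a = star (a * (ad * a)) := by rw [star_mul, h4]
      _ = star a := by rw [← mul_assoc, h1]
  have k4 : star a * (a * ad) = star a := by
    calc star a * (a * ad) = star (a * ad * a) := by rw [star_mul, h3]
      _ = star a := by rw [h1]
  constructor
  · intro hep
    have e1 : ad * a * a = a := by rw [← hep, h1]
    have e2 : a * (a * ad) = a := by rw [hep, ← mul_assoc, h1]
    refine ⟨⟨star ad * (a * star a), ?_⟩, ⟨star a * a * star ad, ?_⟩⟩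
    · rw [← mul_assoc, k1, ← mul_assoc, e1]
    · rw [mul_assoc, k2, mul_assoc, e2]
  · rintro ⟨⟨r, hr⟩, ⟨s, hs⟩⟩
    have ha1 : a * (star a * star ad) = a := by rw [k1, ← mul_assoc, h1]
    have hA : a = star a * (r * star ad) := by
      rw [← mul_assoc, ← hr, mul_assoc]; exact ha1.symm
    have hb1 : star ad * star a * a = a := by rw [k2, h1]
    have hB : a = star ad * (s * star a) := by
      rw [← hs, ← mul_assoc]; exact hb1.symm
    have hq : ad * a * a = a := by
      have h := congrArg (ad * a * ·) hA
      rw [← mul_assoc, k3, ← hA] at h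
      exact h
    have hp : a * (a * ad) = a := by
      have h := congrArg (· * (a * ad)) hB
      rw [mul_assoc, mul_assoc, k4, ← hB] at h
      exact h
    conv_rhs => rw [← hp]
    rw [← mul_assoc, ← mul_assoc, hq]
end

section
/- Let R be a unitary ring, d ∈ R regular, and a invertible along d. If x is an inner inverse of dad (i.e., (dad)x(dad) = dad), then a^{∥d} = d x d. -/
theorem inv_along_dxd {R : Type*} [Ring R] (a b d x : R)
    (hreg : ∃ dbar, d * dbar * d = d) (hb : IsInvAlong b a d)
    (hx : d * a * d * x * (d * a * d) = d * a * d) :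
    b = d * x * d := by
  obtain ⟨hbab, hR, hL⟩ := hb
  have hbmem : (b : R) ∈ {x | ∃ r, x = d * r} := hR ▸ ⟨1, (mul_one b).symm⟩
  obtain ⟨s, hs⟩ := hbmem
  have hdmem : (d : R) ∈ {x | ∃ r, x = b * r} := hR.symm ▸ ⟨1, (mul_one d).symm⟩
  obtain ⟨u, hu⟩ := hdmem
  have hbmem' : (b : R) ∈ {x | ∃ r, x = r * d} := hL ▸ ⟨1, (one_mul b).symm⟩
  obtain ⟨t, ht⟩ := hbmem'
  have hdmem' : (d : R) ∈ {x | ∃ r, x = r * b} := hL.symm ▸ ⟨1, (one_mul d).symm⟩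
  obtain ⟨v, hv⟩ := hdmem'
  have hbad : b * a * d = d := by
    calc b * a * d = b * a * (b * u) := by rw [← hu]
      _ = b * a * b * u := by noncomm_ring
      _ = b * u := by rw [hbab]
      _ = d := hu.symm
  have hdab : d * a * b = d := by
    calc d * a * b = v * b * a * b := by rw [← hv]
      _ = v * (b * a * b) := by noncomm_ring
      _ = v * b := by rw [hbab]
      _ = d := hv.symm
  have E1 : b = t * (d * a * d) * s := by
    calc b = b * a * b := hbab.symm
      _ = (t * d) * a * (d * s) := by rw [← ht, ← hs]
      _ = t * (d * a * d) * s := by noncomm_ring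
  have E2 : d * x * d = t * (d * a * d) * s := by
    calc d * x * d = (b * a * d) * x * (d * a * b) := by rw [hbad, hdab]
      _ = ((t * d) * a * d) * x * (d * a * (d * s)) := by rw [← ht, ← hs]
      _ = t * (d * a * d * x * (d * a * d)) * s := by noncomm_ring
      _ = t * (d * a * d) * s := by rw [hx]
  exact E1.trans E2.symm
end

section
/- Let R be a unitary ring and a ∈ R group invertible. If x is an inner inverse of a³ (a³ x a³ = a³), then a^# = a x a. -/
theorem group_inverse_via_inner_of_cube {R : Type*} [Ring R] (a as x : R)
    (h1 : a * as * a = a) (h2 : as * a * as = as) (h3 : a * as = as * a)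
    (hx : a * a * a * x * (a * a * a) = a * a * a) :
    as = a * x * a := by
  have h4 : as * a * a = a := by rw [← h3]; exact h1
  have h4' : a * a * as = a := by rw [mul_assoc, h3, ← mul_assoc]; exact h1
  have h5 : as * as * (a * a * a) = a := by
    calc as * as * (a * a * a) = as * (as * a * a) * a := by noncomm_ring
      _ = a := by rw [h4]; exact h4
  have h6 : a * a * a * (as * as) = a := by
    calc a * a * a * (as * as) = a * (a * a * as) * as := by noncomm_ring
      _ = a := by rw [h4']; exact h4'
  symm
  calc a * x * a = (as * as * (a * a * a)) * x * (a * a * a * (as * as)) := by rw [h5, h6]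
    _ = as * as * (a * a * a * x * (a * a * a)) * (as * as) := by noncomm_ring
    _ = as * as * (a * a * a) * (as * as) := by rw [hx]
    _ = a * (as * as) := by rw [h5]
    _ = as * a * as := by rw [← mul_assoc, h3]
    _ = as := h2
end
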